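/- arXiv:2510.19187 — 2 statements merged into one kernel-verified Lean document; each statement's English description precedes it below -/
import Mathlib

section
/- Let μ be a Borel probability measure with compact support in ℝ², and let Λ ⊆ ℝ² be a countable subset. Then Λ is a spectrum of μ if and only if Q_Λ(ξ) := Σ_{λ∈Λ} |μ̂(ξ+λ)|² = 1 for Lebesgue-almost every ξ ∈ ℝ². -/
open MeasureTheory Filter Set Metric
open scoped ENNReal

noncomputable section

/-- The plane with the Euclidean metric. -/
abbrev Plane : Type := EuclideanSpace ℝ (Fin 2)

/-- The point `(a, b)` of the Euclidean plane. -/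
def pt (a b : ℝ) : Plane := WithLp.toLp 2 ![a, b]

/-- The self-affine measure `μ_{R,B}` for `R = [[2,1],[0,2]]`, `B = {(0,0),(1,0)}`:
the pushforward of Lebesgue measure on `[0,1]` under `x ↦ (x, 0)`. -/
def muRB : Measure Plane :=
  Measure.map (fun x : ℝ => pt x 0) (volume.restrict (Set.Icc (0:ℝ) 1))

instance : IsProbabilityMeasure (volume.restrict (Set.Icc (0:ℝ) 1)) :=
  ⟨by simp [Real.volume_Icc]⟩

lemma measurable_pt0 : Measurable (fun x : ℝ => pt x 0) := by
  unfold pt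
  refine (WithLp.measurable_toLp 2 _).comp (measurable_pi_lambda _ (fun i => ?_))
  fin_cases i
  · simp only [Matrix.cons_val_zero]
    exact measurable_id
  · simp only [Matrix.cons_val_one, Matrix.head_cons]
    exact measurable_const

instance : IsProbabilityMeasure muRB :=
  Measure.isProbabilityMeasure_map measurable_pt0.aemeasurable

/-- The Fourier transform `μ̂(ξ) = ∫ e^{-2πi⟨ξ,x⟩} dμ(x)` of a measure on the plane. -/
def fourierTransform (μ : Measure Plane) (ξ : Plane) : ℂ :=
  ∫ x, Complex.exp ((-(2 * Real.pi * (inner ℝ ξ x : ℝ)) : ℝ) * Complex.I) ∂μ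

/-- The exponential function `e_λ(x) = e^{-2πi⟨λ,x⟩}`. -/
def expFn (lam : Plane) : Plane → ℂ :=
  fun x => Complex.exp ((-(2 * Real.pi * (inner ℝ lam x : ℝ)) : ℝ) * Complex.I)

lemma expFn_memLp (μ : Measure Plane) [IsFiniteMeasure μ] (lam : Plane) :
    MemLp (expFn lam) 2 μ := by
  refine MemLp.of_bound ?_ 1 ?_
  · apply Continuous.aestronglyMeasurable
    unfold expFn
    have h1 : Continuous fun x : Plane => (inner ℝ lam x : ℝ) :=
      continuous_const.inner continuous_id
    exact Complex.continuous_exp.comp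
      ((Complex.continuous_ofReal.comp ((continuous_const.mul h1).neg)).mul continuous_const)
  · refine Eventually.of_forall fun x => ?_
    unfold expFn
    rw [Complex.norm_exp_ofReal_mul_I]

/-- The exponential `e_λ` as an element of `L²(μ)`. -/
def expLp (μ : Measure Plane) [IsFiniteMeasure μ] (lam : Plane) : Lp ℂ 2 μ :=
  (expFn_memLp μ lam).toLp _

/-- `Λ` is an orthogonal set of `μ`: the exponentials `{e_λ : λ ∈ Λ}` form an
orthonormal family in `L²(μ)`. -/
def IsOrthogonalSet (μ : Measure Plane) [IsFiniteMeasure μ] (Λ : Set Plane) : Prop :=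
  Orthonormal ℂ (fun lam : Λ => expLp μ lam)

/-- `Λ` is a spectrum of `μ`: the exponentials `{e_λ : λ ∈ Λ}` form an
orthonormal basis of `L²(μ)`. -/
def IsSpectrum (μ : Measure Plane) [IsFiniteMeasure μ] (Λ : Set Plane) : Prop :=
  Orthonormal ℂ (fun lam : Λ => expLp μ lam) ∧
    (Submodule.span ℂ (Set.range (fun lam : Λ => expLp μ lam))).topologicalClosure = ⊤

/-- The upper `r`-Beurling density
`D_r^+(Λ) = limsup_{h→∞} sup_{x} #(Λ ∩ B(x,h)) / h^r`. -/
def beurlingDensity (r : ℝ) (Λ : Set Plane) : ℝ≥0∞ :=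
  limsup (fun h : ℝ =>
    ⨆ x : Plane, ((Λ ∩ Metric.ball x h).encard : ℝ≥0∞) / ENNReal.ofReal (h ^ r)) atTop

/-- The upper `r`-density (centered at the origin)
`B_r^+(Λ) = limsup_{h→∞} #(Λ ∩ B(0,h)) / h^r`. -/
def upperDensity (r : ℝ) (Λ : Set Plane) : ℝ≥0∞ :=
  limsup (fun h : ℝ =>
    ((Λ ∩ Metric.ball (0 : Plane) h).encard : ℝ≥0∞) / ENNReal.ofReal (h ^ r)) atTop

/-- The Beurling dimension `dim_Be(Λ) = sup {r > 0 : D_r^+(Λ) = ∞}`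
(equal to `0` when the set is empty, by the convention `sSup ∅ = 0` in `ℝ`). -/
def beurlingDim (Λ : Set Plane) : ℝ :=
  sSup {r : ℝ | 0 < r ∧ beurlingDensity r Λ = ⊤}

/-- The Banach dimension `dim_Ba(Λ) = sup {r > 0 : B_r^+(Λ) = ∞}`. -/
def banachDim (Λ : Set Plane) : ℝ :=
  sSup {r : ℝ | 0 < r ∧ upperDensity r Λ = ⊤}

/-- The sign of an integer, as a real number. -/
def isgn (n : ℤ) : ℝ := (Int.sign n : ℝ)

end

/-!
For `ξ ∈ ℝ²` we have `⟨e_λ, e_{-ξ}⟩ = μ̂(-ξ-λ)`, so `Q_Λ(ξ)` is the Bessel sum of the unit vector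
`e_{-ξ}` against `E(Λ)`. If `E(Λ)` is an orthonormal basis, Parseval gives `Q_Λ ≡ 1`.
Conversely, by continuity of `μ̂` the finite partial sums of `Q_Λ` are `≤ 1` everywhere, and at
`ξ = -λ` this forces `μ̂(λ' - λ) = 0`, i.e. orthonormality. A vector `g ⊥ E(Λ)` is orthogonal to
`e_{-ξ}` whenever Bessel's inequality for `e_{-ξ}` is an equality, i.e. for a.e. `ξ`, hence, by
continuity, to every exponential; so the finite complex measure `conj g • μ` has vanishing Fourier
transform, and `g = 0`.
-/

section HilbertSpace

variable {ι 𝕜 E : Type*} [RCLike 𝕜] [NormedAddCommGroup E] [InnerProductSpace 𝕜 E]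

open RCLike in
theorem HilbertBasis.tsum_norm_sq_inner [CompleteSpace E] (b : HilbertBasis ι 𝕜 E) (x : E) :
    ∑' i, ‖(inner 𝕜 (b i) x : 𝕜)‖ ^ 2 = ‖x‖ ^ 2 := by
  have h := (b.hasSum_inner_mul_inner x x).mapL (reCLM : 𝕜 →L[ℝ] ℝ)
  simp only [reCLM_apply, inner_mul_symm_re_eq_norm, norm_mul, norm_inner_symm x, ← sq] at h
  rw [h.tsum_eq, inner_self_eq_norm_sq]

theorem Orthonormal.inner_eq_zero_of_tsum_norm_sq_inner_eq {v : ι → E} (hv : Orthonormal 𝕜 v)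
    {u x : E} (hu : ∀ i, (inner 𝕜 (v i) u : 𝕜) = 0)
    (hx : ∑' i, ‖(inner 𝕜 (v i) x : 𝕜)‖ ^ 2 = ‖x‖ ^ 2) : (inner 𝕜 u x : 𝕜) = 0 := by
  wlog hu1 : ‖u‖ = 1 generalizing u
  · by_cases hu0 : u = 0
    · rw [hu0, inner_zero_left]
    have hw := this (u := (‖u‖ : 𝕜)⁻¹ • u) (fun i => by rw [inner_smul_right, hu i, mul_zero])
      (norm_smul_inv_norm hu0)
    simpa [inner_smul_left, hu0] using hw
  -- Bessel's inequality for `y = x - ⟪u, x⟫ u`, which has the same coefficients as `x`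
  -- and squared norm `‖x‖² - |⟪u, x⟫|²`.
  set c : 𝕜 := inner 𝕜 u x
  set y : E := x - c • u
  have hvy : ∀ i, (inner 𝕜 (v i) y : 𝕜) = inner 𝕜 (v i) x := fun i => by
    rw [inner_sub_right, inner_smul_right, hu i, mul_zero, sub_zero]
  have hpyth : ‖x‖ ^ 2 = ‖y‖ ^ 2 + ‖c‖ ^ 2 := by
    have hyu : (inner 𝕜 y (c • u) : 𝕜) = 0 := by
      rw [inner_smul_right, inner_sub_left, inner_smul_left, inner_self_eq_norm_sq_to_K, hu1,
        ← inner_conj_symm]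
      simp [c]
    have := norm_add_sq_eq_norm_sq_add_norm_sq_of_inner_eq_zero y (c • u) hyu
    rw [sub_add_cancel, norm_smul, hu1, mul_one] at this
    simpa [sq] using this
  have hbessel := hv.tsum_inner_products_le y
  simp only [hvy, hx] at hbessel
  have : ‖c‖ ^ 2 ≤ 0 := by linarith
  simpa using this

end HilbertSpace

section FourierUniqueness

open Complex ComplexConjugate RealInnerProductSpace

variable {E : Type*} [NormedAddCommGroup E] [InnerProductSpace ℝ E]

lemma conj_exp_inner_mul_I (x t : E) : conj (exp (⟪x, t⟫ * I)) = exp (⟪x, -t⟫ * I) := by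
  rw [← exp_conj, map_mul, conj_ofReal, conj_I, inner_neg_right, ofReal_neg, neg_mul_comm]

variable [MeasurableSpace E] [BorelSpace E] {μ : Measure E}

lemma MeasureTheory.Integrable.mul_exp_inner_mul_I {f : E → ℂ} (hf : Integrable f μ) (t : E) :
    Integrable (fun x => f x * exp (⟪x, t⟫ * I)) μ :=
  hf.mul_bdd (by fun_prop : Continuous fun x : E => exp (⟪x, t⟫ * I)).aestronglyMeasurable
    (ae_of_all _ fun x => (norm_exp_ofReal_mul_I _).le)

lemma continuous_integral_mul_exp_inner_mul_I {f : E → ℂ} (hf : Integrable f μ) :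
    Continuous fun t => ∫ x, f x * exp (⟪x, t⟫ * I) ∂μ :=
  continuous_of_dominated (fun t => (hf.mul_exp_inner_mul_I t).1)
    (fun t => ae_of_all _ fun x => by rw [norm_mul, norm_exp_ofReal_mul_I, mul_one]) hf.norm
    (ae_of_all _ fun x => by fun_prop)

variable [CompleteSpace E] [SecondCountableTopology E] [IsFiniteMeasure μ]

theorem ae_eq_zero_of_forall_integral_ofReal_mul_exp_eq_zero {f : E → ℝ} (hf : Integrable f μ)
    (h : ∀ t, ∫ x, (f x : ℂ) * exp (⟪x, t⟫ * I) ∂μ = 0) : f =ᵐ[μ] 0 := by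
  have := isFiniteMeasure_withDensity_ofReal hf.2
  have : IsFiniteMeasure (μ.withDensity fun x => ENNReal.ofReal (-f x)) :=
    isFiniteMeasure_withDensity_ofReal hf.neg.2
  have hpos := hf.aemeasurable.ennreal_ofReal
  have hneg : AEMeasurable (fun x => ENNReal.ofReal (-f x)) μ := hf.aemeasurable.neg.ennreal_ofReal
  -- `f⁺ • μ` and `f⁻ • μ` have the same characteristic function, hence are equal.
  have hchar : charFun (μ.withDensity fun x => ENNReal.ofReal (f x))
      = charFun (μ.withDensity fun x => ENNReal.ofReal (-f x)) := by
    ext t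
    simp only [charFun_apply]
    rw [integral_withDensity_eq_integral_toReal_smul₀ hpos (ae_of_all _ fun _ => by simp),
      integral_withDensity_eq_integral_toReal_smul₀ hneg (ae_of_all _ fun _ => by simp),
      ← sub_eq_zero, ← integral_sub, ← h t]
    · congr 1 with x
      rw [ENNReal.toReal_ofReal', ENNReal.toReal_ofReal', real_smul, real_smul, ← sub_mul,
        ← ofReal_sub, max_zero_sub_max_neg_zero_eq_self]
    all_goals simp only [ENNReal.toReal_ofReal', real_smul]
    · exact hf.pos_part.ofReal.mul_exp_inner_mul_I t
    · exact hf.neg_part.ofReal.mul_exp_inner_mul_I t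
  have hdens := (withDensity_eq_iff_of_sigmaFinite hpos hneg).1 (Measure.ext_of_charFun hchar)
  filter_upwards [hdens] with x hx
  rw [Pi.zero_apply, ← max_zero_sub_max_neg_zero_eq_self (f x), ← ENNReal.toReal_ofReal',
    ← ENNReal.toReal_ofReal', hx, sub_self]

theorem ae_eq_zero_of_forall_integral_mul_exp_eq_zero {f : E → ℂ} (hf : Integrable f μ)
    (h : ∀ t, ∫ x, f x * exp (⟪x, t⟫ * I) ∂μ = 0) : f =ᵐ[μ] 0 := by
  have hfc : Integrable (fun x => conj (f x)) μ :=
    memLp_one_iff_integrable.1 (memLp_one_iff_integrable.2 hf).star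
  -- Replacing `t` by `-t` and conjugating shows that `conj f`, hence also `re f` and `im f`,
  -- satisfy the same hypothesis.
  have hconj : ∀ t, ∫ x, conj (f x) * exp (⟪x, t⟫ * I) ∂μ = 0 := fun t => by
    have := congrArg conj (h (-t))
    rw [← integral_conj, map_zero] at this
    simpa only [map_mul, conj_exp_inner_mul_I, neg_neg] using this
  have hsum : ∀ t, ∫ x, (f x + conj (f x)) * exp (⟪x, t⟫ * I) ∂μ = 0 := fun t => by
    simp only [add_mul]
    rw [integral_add (hf.mul_exp_inner_mul_I t) (hfc.mul_exp_inner_mul_I t), h, hconj,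
      add_zero]
  have hdiff : ∀ t, ∫ x, (f x - conj (f x)) * exp (⟪x, t⟫ * I) ∂μ = 0 := fun t => by
    simp only [sub_mul]
    rw [integral_sub (hf.mul_exp_inner_mul_I t) (hfc.mul_exp_inner_mul_I t), h, hconj,
      sub_zero]
  have hre := ae_eq_zero_of_forall_integral_ofReal_mul_exp_eq_zero (f := fun x => (f x).re) hf.re
    fun t => by simp only [re_eq_add_conj, div_mul_eq_mul_div, integral_div, hsum, zero_div]
  have him := ae_eq_zero_of_forall_integral_ofReal_mul_exp_eq_zero (f := fun x => (f x).im) hf.im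
    fun t => by simp only [im_eq_sub_conj, div_mul_eq_mul_div, integral_div, hdiff, zero_div]
  filter_upwards [hre, him] with x hxre hxim
  exact Complex.ext hxre hxim

end FourierUniqueness

theorem MeasureTheory.Measure.forall_of_ae_of_isClosed {X : Type*} [TopologicalSpace X]
    [MeasurableSpace X] {μ : Measure X} [μ.IsOpenPosMeasure] {p : X → Prop}
    (hp : IsClosed {x | p x}) (h : ∀ᵐ x ∂μ, p x) (x : X) : p x := by
  have := (dense_of_ae h).closure_eq
  rw [hp.closure_eq] at this
  exact (this ▸ mem_univ x : x ∈ {x | p x})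

section Exponentials

open Complex ComplexConjugate RealInnerProductSpace

lemma expFn_eq_exp_inner (ξ x : Plane) : expFn ξ x = exp (⟪x, -(2 * Real.pi) • ξ⟫ * I) := by
  rw [expFn, real_inner_smul_right, real_inner_comm]
  push_cast
  ring_nf

lemma conj_expFn_mul_expFn (a b x : Plane) : conj (expFn a x) * expFn b x = expFn (b - a) x := by
  rw [expFn_eq_exp_inner, expFn_eq_exp_inner, expFn_eq_exp_inner, conj_exp_inner_mul_I, ← exp_add,
    ← add_mul, ← ofReal_add, ← inner_add_right, smul_sub, sub_eq_neg_add]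

variable (μ : Measure Plane)

lemma fourierTransform_eq_charFun (ξ : Plane) :
    fourierTransform μ ξ = charFun μ (-(2 * Real.pi) • ξ) := by
  simp_rw [charFun_apply, ← expFn_eq_exp_inner]
  rfl

lemma continuous_fourierTransform [IsFiniteMeasure μ] : Continuous (fourierTransform μ) := by
  rw [funext (fourierTransform_eq_charFun μ)]
  exact continuous_charFun.comp (continuous_const_smul _)

lemma fourierTransform_zero [IsProbabilityMeasure μ] : fourierTransform μ 0 = 1 := by
  simp [fourierTransform_eq_charFun]

variable [IsFiniteMeasure μ]

lemma inner_expLp_right (g : Lp ℂ 2 μ) (η : Plane) :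
    inner ℂ g (expLp μ η) = ∫ x, conj (g x) * expFn η x ∂μ := by
  rw [L2.inner_def]
  refine integral_congr_ae ?_
  filter_upwards [(expFn_memLp μ η).coeFn_toLp] with x hx
  rw [RCLike.inner_apply, expLp, hx, mul_comm]

lemma inner_expLp_expLp (a b : Plane) :
    inner ℂ (expLp μ a) (expLp μ b) = fourierTransform μ (b - a) := by
  rw [inner_expLp_right]
  refine integral_congr_ae ?_
  filter_upwards [(expFn_memLp μ a).coeFn_toLp] with x hx
  rw [expLp, hx, conj_expFn_mul_expFn]
  rfl

lemma norm_inner_expLp_neg (a ξ : Plane) :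
    ‖inner ℂ (expLp μ a) (expLp μ (-ξ))‖ = ‖fourierTransform μ (ξ + a)‖ := by
  rw [norm_inner_symm, inner_expLp_expLp, sub_neg_eq_add, add_comm]

lemma inner_expLp_eq_integral_exp (g : Lp ℂ 2 μ) (η : Plane) :
    inner ℂ g (expLp μ η) = ∫ x, conj (g x) * exp (⟪x, -(2 * Real.pi) • η⟫ * I) ∂μ := by
  simp_rw [inner_expLp_right, expFn_eq_exp_inner]

lemma integrable_conj_Lp (g : Lp ℂ 2 μ) : Integrable (fun x => conj (g x)) μ :=
  (Lp.memLp g).star.integrable one_le_two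

lemma continuous_inner_expLp (g : Lp ℂ 2 μ) : Continuous fun η => inner ℂ g (expLp μ η) := by
  simp_rw [inner_expLp_eq_integral_exp]
  exact (continuous_integral_mul_exp_inner_mul_I (integrable_conj_Lp μ g)).comp
    (continuous_const_smul _)

theorem eq_zero_of_forall_inner_expLp_eq_zero (g : Lp ℂ 2 μ)
    (h : ∀ η, inner ℂ g (expLp μ η) = 0) : g = 0 := by
  have hc : (-(2 * Real.pi)) ≠ 0 := by simp [Real.pi_ne_zero]
  have hg := ae_eq_zero_of_forall_integral_mul_exp_eq_zero (integrable_conj_Lp μ g) fun t => by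
    rw [← smul_inv_smul₀ hc t, ← inner_expLp_eq_integral_exp, h]
  rw [Lp.eq_zero_iff_ae_eq_zero]
  filter_upwards [hg] with x hx
  simpa using hx

end Exponentials

section Spectrum

variable (μ : Measure Plane) [IsProbabilityMeasure μ] (Λ : Set Plane)

lemma norm_expLp (a : Plane) : ‖expLp μ a‖ = 1 := by
  have h := inner_expLp_expLp μ a a
  rw [sub_self, fourierTransform_zero] at h
  rw [← pow_eq_one_iff_of_nonneg (norm_nonneg _) two_ne_zero, ← inner_self_eq_norm_sq (𝕜 := ℂ),
    h, RCLike.one_re]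

lemma orthonormal_expLp_iff : Orthonormal ℂ (fun lam : Λ => expLp μ lam) ↔
    Λ.Pairwise fun a b => fourierTransform μ (b - a) = 0 := by
  simp only [orthonormal_iff_ite, inner_expLp_expLp, Set.Pairwise, Subtype.forall,
    Subtype.mk.injEq]
  refine ⟨fun h a ha b hb hab => by simpa [hab] using h a ha b hb, fun h a ha b hb => ?_⟩
  split_ifs with hab
  · rw [hab, sub_self, fourierTransform_zero]
  · exact h ha hb hab

lemma tsum_norm_sq_fourierTransform_of_isSpectrum (h : IsSpectrum μ Λ) (ξ : Plane) :
    ∑' lam : Λ, ‖fourierTransform μ (ξ + lam)‖ ^ 2 = 1 := by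
  have := (HilbertBasis.mk h.1 h.2.ge).tsum_norm_sq_inner (expLp μ (-ξ))
  simpa only [HilbertBasis.coe_mk, norm_inner_expLp_neg, norm_expLp, one_pow] using this

variable {μ Λ}

lemma sum_norm_sq_fourierTransform_le_one
    (h : ∀ᵐ ξ ∂(volume : Measure Plane), ∑' lam : Λ, ‖fourierTransform μ (ξ + lam)‖ ^ 2 = 1)
    (F : Finset Λ) (ξ : Plane) : ∑ lam ∈ F, ‖fourierTransform μ (ξ + lam)‖ ^ 2 ≤ 1 := by
  have hcont : Continuous fun ξ => ∑ lam ∈ F, ‖fourierTransform μ (ξ + lam)‖ ^ 2 :=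
    continuous_finsetSum _ fun lam _ =>
      ((continuous_fourierTransform μ).comp (continuous_add_const _)).norm.pow 2
  refine Measure.forall_of_ae_of_isClosed (μ := volume) (isClosed_le hcont continuous_const) ?_ ξ
  filter_upwards [h] with ξ hξ
  have hs : Summable fun lam : Λ => ‖fourierTransform μ (ξ + lam)‖ ^ 2 := by
    by_contra hns
    rw [tsum_eq_zero_of_not_summable hns] at hξ
    exact zero_ne_one hξ
  exact hξ ▸ hs.sum_le_tsum F fun _ _ => sq_nonneg _

lemma orthonormal_expLp_of_ae_tsum_eq_one
    (h : ∀ᵐ ξ ∂(volume : Measure Plane), ∑' lam : Λ, ‖fourierTransform μ (ξ + lam)‖ ^ 2 = 1) :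
    Orthonormal ℂ (fun lam : Λ => expLp μ lam) := by
  refine (orthonormal_expLp_iff μ Λ).2 fun a ha b hb hab => ?_
  -- the partial sum over `{a, b}` at `ξ = -a` is `1 + |μ̂(b - a)|²`
  have hle := sum_norm_sq_fourierTransform_le_one h {⟨a, ha⟩, ⟨b, hb⟩} (-a)
  rw [Finset.sum_pair (by simpa using hab)] at hle
  simp only [neg_add_cancel, fourierTransform_zero, norm_one, one_pow, neg_add_eq_sub] at hle
  simpa using hle

lemma topologicalClosure_span_expLp_eq_top (hON : Orthonormal ℂ (fun lam : Λ => expLp μ lam))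
    (h : ∀ᵐ ξ ∂(volume : Measure Plane), ∑' lam : Λ, ‖fourierTransform μ (ξ + lam)‖ ^ 2 = 1) :
    (Submodule.span ℂ (Set.range fun lam : Λ => expLp μ lam)).topologicalClosure = ⊤ := by
  rw [Submodule.topologicalClosure_eq_top_iff, Submodule.eq_bot_iff]
  intro g hg
  have hgΛ : ∀ lam : Λ, inner ℂ (expLp μ lam) g = 0 := fun lam =>
    (Submodule.mem_orthogonal _ g).1 hg _ (Submodule.subset_span ⟨lam, rfl⟩)
  have hae : ∀ᵐ ξ ∂(volume : Measure Plane), inner ℂ g (expLp μ (-ξ)) = 0 := by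
    filter_upwards [h] with ξ hξ
    refine hON.inner_eq_zero_of_tsum_norm_sq_inner_eq hgΛ ?_
    simpa only [norm_inner_expLp_neg, norm_expLp, one_pow] using hξ
  refine eq_zero_of_forall_inner_expLp_eq_zero μ g fun η => ?_
  simpa using Measure.forall_of_ae_of_isClosed
    (isClosed_eq ((continuous_inner_expLp μ g).comp continuous_neg) continuous_const) hae (-η)

end Spectrum

theorem isSpectrum_iff_sum_sq_fourier_ae_one_general (μ : Measure Plane) [IsProbabilityMeasure μ]
    (Λ : Set Plane) :
    IsSpectrum μ Λ ↔
      ∀ᵐ ξ ∂(volume : Measure Plane),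
        (∑' lam : Λ, ‖fourierTransform μ (ξ + (lam : Plane))‖ ^ 2) = 1 := by
  constructor
  · exact fun h => ae_of_all _ (tsum_norm_sq_fourierTransform_of_isSpectrum μ Λ h)
  · intro h
    have hON := orthonormal_expLp_of_ae_tsum_eq_one h
    exact ⟨hON, topologicalClosure_span_expLp_eq_top hON h⟩

/-- Jorgensen–Pedersen criterion. Let `μ` be a compactly supported Borel
probability measure on the plane and `Λ` a countable set. Then `Λ` is a spectrum of `μ`
iff `Q_Λ(ξ) = Σ_{λ∈Λ} |μ̂(ξ+λ)|² = 1` for Lebesgue-a.e. `ξ`. -/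
theorem isSpectrum_iff_sum_sq_fourier_ae_one (μ : Measure Plane) [IsProbabilityMeasure μ]
    (hK : ∃ K : Set Plane, IsCompact K ∧ μ Kᶜ = 0)
    (Λ : Set Plane) (hΛ : Λ.Countable) :
    IsSpectrum μ Λ ↔
      ∀ᵐ ξ ∂(volume : Measure Plane),
        (∑' lam : Λ, ‖fourierTransform μ (ξ + (lam : Plane))‖ ^ 2) = 1 :=
  isSpectrum_iff_sum_sq_fourier_ae_one_general μ Λ
end

section
/- Let μ = μ_{R,B} be the self-affine measure for R = [[2,1],[0,2]] and B = {(0,0),(1,0)}, and define β : ℤ → ℝ by β(n) = sgn(n)·2^{|n|} (so β(0) = 0). Then Λ_β = {(n, β(n)) : n ∈ ℤ} is a spectrum of μ with dim_Be(Λ_β) = 0. In particular, there exists a spectrum of μ with Beurling dimension zero. -/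
open MeasureTheory Filter Set Metric
open scoped ENNReal

/-! On the support `[0,1] × {0}` of `μ` the exponential `e_(n,b)` does not depend on `b`: it is the
character `x ↦ e^{-2πinx}`. The projection of the plane onto `ℝ/ℤ` is measure preserving with an
a.e. inverse, so composing with it carries the Fourier basis of `L²(ℝ/ℤ)` onto `{e_λ : λ ∈ Λ}`,
whatever the second coordinates of the points of `Λ` are.

For `β(n) = sgn(n) 2^|n|` and `h ≤ 2^K`, the points with `n > K` have second coordinates more than
`2h` apart, so a ball of radius `h` contains at most one of them, and likewise for `n < -K`. Hence
it contains at most `2K + 3 = O(log h)` points of `Λ_β`, which is `o(h^r)` for every `r > 0`. -/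

noncomputable section

open Real

namespace MeasureTheory

variable {α β : Type*} [MeasurableSpace α] [MeasurableSpace β] {μ : Measure α} {ν : Measure β}
  {f : α → β} {g : β → α}

theorem MeasurePreserving.of_ae_leftInverse (hf : MeasurePreserving f μ ν) (hg : Measurable g)
    (hgf : ∀ᵐ x ∂μ, g (f x) = x) : MeasurePreserving g ν μ :=
  ⟨hg, by
    rw [← hf.map_eq, Measure.map_map hg hf.measurable]
    exact (Measure.map_congr (g := id) hgf).trans Measure.map_id⟩

theorem Lp.compMeasurePreserving_surjective {E : Type*} [NormedAddCommGroup E] {p : ℝ≥0∞}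
    (hf : MeasurePreserving f μ ν) (hg : Measurable g) (hgf : ∀ᵐ x ∂μ, g (f x) = x) :
    Function.Surjective (Lp.compMeasurePreserving f hf : Lp E p ν → Lp E p μ) := by
  intro u
  have hg' := hf.of_ae_leftInverse hg hgf
  refine ⟨Lp.compMeasurePreserving g hg' u, Lp.ext ?_⟩
  filter_upwards [Lp.coeFn_compMeasurePreserving (Lp.compMeasurePreserving g hg' u) hf,
    hf.quasiMeasurePreserving.ae_eq_comp (Lp.coeFn_compMeasurePreserving u hg'), hgf]
    with x h₁ h₂ h₃
  rw [h₁]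
  exact h₂.trans (congrArg u h₃)

end MeasureTheory

namespace HilbertBasis

variable {ι 𝕜 E F : Type*} [RCLike 𝕜] [NormedAddCommGroup E] [InnerProductSpace 𝕜 E]
  [NormedAddCommGroup F] [InnerProductSpace 𝕜 F]

def map (b : HilbertBasis ι 𝕜 E) (L : E ≃ₗᵢ[𝕜] F) : HilbertBasis ι 𝕜 F :=
  .ofRepr (L.symm.trans b.repr)

theorem map_apply (b : HilbertBasis ι 𝕜 E) (L : E ≃ₗᵢ[𝕜] F) (i : ι) : b.map L i = L (b i) :=
  rfl

end HilbertBasis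

theorem isSpectrum_of_hilbertBasis {μ : Measure Plane} [IsFiniteMeasure μ] {ι : Type*}
    {Λ : Set Plane} (b : HilbertBasis ι ℂ (Lp ℂ 2 μ)) (e : ι ≃ Λ)
    (hb : ∀ i, b i = expLp μ (e i)) : IsSpectrum μ Λ := by
  have hfam : (fun lam : Λ => expLp μ lam) = b ∘ e.symm := funext fun lam => by simp [hb]
  refine ⟨?_, ?_⟩
  · rw [hfam]
    exact b.orthonormal.comp _ e.symm.injective
  · rw [hfam, e.symm.surjective.range_comp]
    exact b.dense_span

theorem inner_pt_pt (a b c d : ℝ) : inner ℝ (pt a b) (pt c d) = a * c + b * d := by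
  simp [pt, PiLp.inner_apply, Fin.sum_univ_two, mul_comm]

theorem measurable_plane_apply_zero : Measurable fun y : Plane => y 0 := by fun_prop

theorem ae_muRB_mem_Ioc_and_pt_eq : ∀ᵐ y ∂muRB, y 0 ∈ Ioc (0 : ℝ) 1 ∧ pt (y 0) 0 = y := by
  rw [muRB, ae_map_iff measurable_pt0.aemeasurable, ← Measure.restrict_congr_set Ioc_ae_eq_Icc]
  · filter_upwards [ae_restrict_mem measurableSet_Ioc] with x hx
    exact ⟨hx, rfl⟩
  · exact (measurableSet_Ioc.preimage measurable_plane_apply_zero).inter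
      (measurableSet_eq_fun (measurable_pt0.comp measurable_plane_apply_zero) measurable_id)

def toCircle (y : Plane) : UnitAddCircle := (y 0 : ℝ)

def ofCircle (z : UnitAddCircle) : Plane := pt (AddCircle.equivIoc 1 0 z) 0

theorem measurePreserving_toCircle :
    MeasurePreserving toCircle muRB AddCircle.haarAddCircle := by
  have hm : Measurable toCircle := AddCircle.measurable_mk'.comp measurable_plane_apply_zero
  refine ⟨hm, ?_⟩
  have h := (AddCircle.measurePreserving_mk 1 0).map_eq
  rw [zero_add, Measure.restrict_congr_set Ioc_ae_eq_Icc] at h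
  have hv : (volume : Measure UnitAddCircle) = AddCircle.haarAddCircle := by
    simp [AddCircle.volume_eq_smul_haarAddCircle]
  rw [muRB, Measure.map_map hm measurable_pt0]
  exact h.trans hv

theorem ae_ofCircle_toCircle : ∀ᵐ y ∂muRB, ofCircle (toCircle y) = y := by
  filter_upwards [ae_muRB_mem_Ioc_and_pt_eq] with y ⟨hy, hpt⟩
  rw [ofCircle, toCircle, AddCircle.equivIoc_coe_of_mem (by rwa [zero_add]), hpt]

theorem measurable_ofCircle : Measurable ofCircle :=
  measurable_pt0.comp (measurable_subtype_coe.comp (AddCircle.measurableEquivIoc 1 0).measurable)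

theorem expFn_pt_neg_apply_pt (n : ℤ) (b x : ℝ) :
    expFn (pt (-n : ℤ) b) (pt x 0) = fourier n (x : UnitAddCircle) := by
  rw [expFn, inner_pt_pt, fourier_coe_apply]
  push_cast
  ring_nf

-- The first coordinate is `((-n : ℤ) : ℝ)` so that this matches the reindexing by `Equiv.neg ℤ`.
theorem expLp_muRB_pt_neg_eq_comp_fourierLp (n : ℤ) (b : ℝ) :
    expLp muRB (pt (-n : ℤ) b) =
      Lp.compMeasurePreserving toCircle measurePreserving_toCircle (fourierLp 2 n) := by
  refine Lp.ext ?_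
  filter_upwards [(expFn_memLp muRB (pt (-n : ℤ) b)).coeFn_toLp,
    Lp.coeFn_compMeasurePreserving (fourierLp 2 n) measurePreserving_toCircle,
    measurePreserving_toCircle.quasiMeasurePreserving.ae_eq_comp (coeFn_fourierLp 2 n),
    ae_muRB_mem_Ioc_and_pt_eq] with y h₁ h₂ h₃ hy
  obtain ⟨x, rfl⟩ : ∃ x, pt x 0 = y := ⟨_, hy.2⟩
  rw [expLp, h₁, h₂, h₃]
  exact expFn_pt_neg_apply_pt n b x

theorem isSpectrum_muRB_range_pt (β : ℤ → ℝ) :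
    IsSpectrum muRB (Set.range fun n : ℤ => pt n (β n)) := by
  have hinj : Function.Injective fun n : ℤ => pt n (β n) := fun m n h => by
    simpa [pt] using congrArg (fun y : Plane => y 0) h
  let L := LinearIsometryEquiv.ofSurjective
    (Lp.compMeasurePreservingₗᵢ ℂ toCircle measurePreserving_toCircle :
      Lp ℂ 2 AddCircle.haarAddCircle →ₗᵢ[ℂ] Lp ℂ 2 muRB)
    (Lp.compMeasurePreserving_surjective measurePreserving_toCircle measurable_ofCircle
      ae_ofCircle_toCircle)
  refine isSpectrum_of_hilbertBasis (fourierBasis.map L)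
    ((Equiv.neg ℤ).trans (Equiv.ofInjective _ hinj)) fun n => ?_
  rw [HilbertBasis.map_apply, coe_fourierBasis]
  exact (expLp_muRB_pt_neg_eq_comp_fourierLp n (β (-n))).symm

theorem pt_neg (a b : ℝ) : pt (-a) (-b) = -pt a b := by
  ext i
  fin_cases i <;> simp [pt]

theorem abs_sub_le_dist_pt (a b c d : ℝ) : |b - d| ≤ dist (pt a b) (pt c d) := by
  simpa [pt, Real.dist_eq] using PiLp.dist_apply_le (pt a b) (pt c d) 1

def lacunaryPt (n : ℤ) : Plane := pt n (isgn n * 2 ^ n.natAbs)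

theorem lacunaryPt_neg (n : ℤ) : lacunaryPt (-n) = -lacunaryPt n := by
  simp [lacunaryPt, isgn, ← pt_neg, neg_mul]

theorem two_pow_le_dist_lacunaryPt {m n : ℕ} (hm : 0 < m) (hmn : m < n) :
    (2 : ℝ) ^ m ≤ dist (lacunaryPt m) (lacunaryPt n) := by
  have hsgn : ∀ k : ℕ, 0 < k → isgn k = 1 := fun k hk => by
    simp [isgn, Int.sign_natCast_of_ne_zero hk.ne']
  have hpow : (2 : ℝ) ^ m * 2 ≤ 2 ^ n := pow_succ (2 : ℝ) m ▸ pow_le_pow_right₀ one_le_two hmn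
  have hpos : (0 : ℝ) < 2 ^ m := by positivity
  calc (2 : ℝ) ^ m ≤ |isgn m * 2 ^ m - isgn n * 2 ^ n| := by
        rw [hsgn m hm, hsgn n (hm.trans hmn), one_mul, one_mul, abs_sub_comm,
          abs_of_nonneg (by linarith)]
        linarith
    _ ≤ dist (lacunaryPt m) (lacunaryPt n) := abs_sub_le_dist_pt _ _ _ _

theorem subsingleton_lacunaryPt_mem_ball {K : ℕ} {h : ℝ} (hK : h ≤ 2 ^ K) (x : Plane) :
    {n : ℤ | K < n ∧ lacunaryPt n ∈ ball x h}.Subsingleton := by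
  have hfar : ∀ m n : ℕ, K < m → m < n →
      lacunaryPt m ∈ ball x h → lacunaryPt n ∈ ball x h → False := by
    intro m n hKm hmn hm hn
    have hdist : dist (lacunaryPt m) (lacunaryPt n) < 2 * h := by
      linarith [dist_triangle_right (lacunaryPt m) (lacunaryPt n) x, mem_ball.1 hm, mem_ball.1 hn]
    have hKm' : (2 : ℝ) ^ K * 2 ≤ 2 ^ m := pow_succ (2 : ℝ) K ▸ pow_le_pow_right₀ one_le_two hKm
    linarith [two_pow_le_dist_lacunaryPt (by omega) hmn]
  rintro m ⟨hKm, hm⟩ n ⟨hKn, hn⟩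
  lift m to ℕ using by omega
  lift n to ℕ using by omega
  rcases lt_trichotomy m n with hmn | rfl | hnm
  · exact (hfar m n (by omega) hmn hm hn).elim
  · rfl
  · exact (hfar n m (by omega) hnm hn hm).elim

theorem encard_range_lacunaryPt_inter_ball_le {K : ℕ} {h : ℝ} (hK : h ≤ 2 ^ K) (x : Plane) :
    (range lacunaryPt ∩ ball x h).encard ≤ (2 * K + 3 : ℕ) := by
  set far := fun y : Plane => {n : ℤ | K < n ∧ lacunaryPt n ∈ ball y h}
  have hcover : lacunaryPt ⁻¹' ball x h ⊆ Icc (-K : ℤ) K ∪ (far x ∪ Neg.neg '' far (-x)) := by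
    intro n hn
    rcases lt_or_ge (K : ℤ) n with hKn | hnK
    · exact Or.inr (Or.inl ⟨hKn, hn⟩)
    rcases lt_or_ge n (-K) with hnK' | hKn'
    · refine Or.inr (Or.inr ⟨-n, ⟨by omega, ?_⟩, neg_neg n⟩)
      rwa [lacunaryPt_neg, mem_ball, dist_neg_neg]
    · exact Or.inl ⟨hKn', hnK⟩
  have hIcc : (Icc (-K : ℤ) K).encard = (2 * K + 1 : ℕ) := by
    rw [← Finset.coe_Icc, encard_coe_eq_coe_finsetCard, Int.card_Icc]
    congr 1
    omega
  calc (range lacunaryPt ∩ ball x h).encard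
      = (lacunaryPt '' (lacunaryPt ⁻¹' ball x h)).encard := by rw [image_preimage_eq_range_inter]
    _ ≤ (lacunaryPt ⁻¹' ball x h).encard := encard_image_le _ _
    _ ≤ (Icc (-K : ℤ) K).encard + ((far x).encard + (Neg.neg '' far (-x)).encard) :=
        (encard_mono hcover).trans
          ((encard_union_le _ _).trans (add_le_add le_rfl (encard_union_le _ _)))
    _ ≤ (2 * K + 1 : ℕ) + (1 + 1) := by
        rw [hIcc]
        gcongr
        · exact encard_le_one_iff_subsingleton.2 (subsingleton_lacunaryPt_mem_ball hK x)
        · exact (encard_image_le _ _).trans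
            (encard_le_one_iff_subsingleton.2 (subsingleton_lacunaryPt_mem_ball hK (-x)))
    _ = (2 * K + 3 : ℕ) := by push_cast; ring

theorem beurlingDensity_le_one_of_eventually_encard_le {r : ℝ} {Λ : Set Plane}
    (hΛ : ∀ᶠ h in atTop, ∀ x, ((Λ ∩ ball x h).encard : ℝ≥0∞) ≤ ENNReal.ofReal (h ^ r)) :
    beurlingDensity r Λ ≤ 1 := by
  refine limsup_le_of_le (by isBoundedDefault) ?_
  filter_upwards [hΛ] with h hh
  exact iSup_le fun x => ENNReal.div_le_of_le_mul (by rw [one_mul]; exact hh x)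

theorem beurlingDim_eq_zero_of_encard_le {Λ : Set Plane} {f : ℝ → ℝ}
    (hf : ∀ r : ℝ, 0 < r → f =o[atTop] fun h => h ^ r)
    (hΛ : ∀ᶠ h in atTop, ∀ x, ((Λ ∩ ball x h).encard : ℝ≥0∞) ≤ ENNReal.ofReal (f h)) :
    beurlingDim Λ = 0 := by
  suffices {r : ℝ | 0 < r ∧ beurlingDensity r Λ = ⊤} = ∅ by
    rw [beurlingDim, this, Real.sSup_empty]
  refine eq_empty_of_forall_notMem fun r ⟨hr, htop⟩ => ?_
  refine ENNReal.one_ne_top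
    (top_le_iff.1 (htop ▸ beurlingDensity_le_one_of_eventually_encard_le ?_))
  filter_upwards [hΛ, ((hf r hr).bound one_pos), eventually_ge_atTop 0] with h hΛh hfh h0 x
  refine (hΛh x).trans (ENNReal.ofReal_le_ofReal ?_)
  rw [one_mul, Real.norm_of_nonneg (Real.rpow_nonneg h0 r)] at hfh
  exact (le_abs_self _).trans hfh

theorem le_two_pow_ceil_logb {h : ℝ} (hh : 0 < h) : h ≤ 2 ^ ⌈logb 2 h⌉₊ := by
  calc h = 2 ^ logb 2 h := (rpow_logb two_pos (by norm_num) hh).symm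
    _ ≤ 2 ^ (⌈logb 2 h⌉₊ : ℝ) := rpow_le_rpow_of_exponent_le one_le_two (Nat.le_ceil _)
    _ = 2 ^ ⌈logb 2 h⌉₊ := rpow_natCast 2 _

theorem isLittleO_logb_add_const_rpow {r : ℝ} (hr : 0 < r) (a b c : ℝ) :
    (fun h => a * logb b h + c) =o[atTop] fun h => h ^ r := by
  have hconst : (fun _ : ℝ => c) =o[atTop] fun h => h ^ r :=
    Asymptotics.isLittleO_const_left.2
      (Or.inr (tendsto_norm_atTop_atTop.comp (tendsto_rpow_atTop hr)))
  refine (((isLittleO_log_rpow_atTop hr).const_mul_left (a / log b)).add hconst).congr_left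
    fun h => ?_
  rw [logb]
  ring

theorem beurlingDim_range_lacunaryPt : beurlingDim (range lacunaryPt) = 0 := by
  refine beurlingDim_eq_zero_of_encard_le (fun r hr => isLittleO_logb_add_const_rpow hr 2 2 5) ?_
  filter_upwards [eventually_ge_atTop 1] with h hh x
  have hlogb : 0 ≤ logb 2 h := logb_nonneg one_lt_two hh
  have hceil : (⌈logb 2 h⌉₊ : ℝ) < logb 2 h + 1 := Nat.ceil_lt_add_one hlogb
  calc ((range lacunaryPt ∩ ball x h).encard : ℝ≥0∞)
      ≤ ((2 * ⌈logb 2 h⌉₊ + 3 : ℕ) : ℝ≥0∞) := by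
        exact_mod_cast ENat.toENNReal_le.2
          (encard_range_lacunaryPt_inter_ball_le (le_two_pow_ceil_logb (by linarith)) x)
    _ = ENNReal.ofReal (2 * ⌈logb 2 h⌉₊ + 3 : ℕ) := (ENNReal.ofReal_natCast _).symm
    _ ≤ ENNReal.ofReal (2 * logb 2 h + 5) := ENNReal.ofReal_le_ofReal (by push_cast; linarith)

end

/-- For `β(n) = sgn(n)·2^{|n|}`, the set `Λ_β` is a spectrum of `μ_{R,B}`
with Beurling dimension zero; in particular `μ_{R,B}` has a spectrum of Beurling
dimension zero. -/
theorem isSpectrum_muRB_exp_beurlingDim_zero :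
    (IsSpectrum muRB (Set.range fun n : ℤ => pt (n : ℝ) (isgn n * 2 ^ n.natAbs)) ∧
      beurlingDim (Set.range fun n : ℤ => pt (n : ℝ) (isgn n * 2 ^ n.natAbs)) = 0) ∧
    ∃ Λ : Set Plane, IsSpectrum muRB Λ ∧ beurlingDim Λ = 0 := by
  have hspec := isSpectrum_muRB_range_pt fun n => isgn n * 2 ^ n.natAbs
  exact ⟨⟨hspec, beurlingDim_range_lacunaryPt⟩, _, hspec, beurlingDim_range_lacunaryPt⟩
end
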